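/- Let k ≥ 2 be an integer and q = p^r with p prime and r ≥ 1. The sequence {S_{F_q}(σ_{n,k})}_{n≥k} of exponential sums over F_q of the elementary symmetric polynomials of degree k satisfies a homogeneous linear recurrence with integer coefficients: there exist an integer d ≥ 1 and integers c_0, …, c_{d−1} such that S_{F_q}(σ_{n,k}) = c_{d−1}·S_{F_q}(σ_{n−1,k}) + ⋯ + c_0·S_{F_q}(σ_{n−d,k}) for all n ≥ k + d. -/
import Mathlib

open Finset

/-- The exponential sum over `F_q` of a function `G : F_qⁿ → F_q`:
`S_{F_q}(G) = ∑_{x ∈ F_qⁿ} e^{(2πi/p)·Tr_{F_q/F_p}(G(x))}`. -/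
noncomputable def expSumGF (p : ℕ) (F : Type) [Field F] [Fintype F] [Algebra (ZMod p) F]
    (n : ℕ) (G : (Fin n → F) → F) : ℂ :=
  ∑ x : Fin n → F,
    Complex.exp (2 * Real.pi * Complex.I * ((Algebra.trace (ZMod p) F (G x)).val : ℂ) / p)

/-- The elementary symmetric polynomial `σ_{n,k}` in `n` variables of degree `k`,
viewed as a function `F_qⁿ → F_q`. -/
def esymFun {F : Type} [CommRing F] (k n : ℕ) (x : Fin n → F) : F :=
  ∑ s ∈ Finset.powersetCard k (Finset.univ : Finset (Fin n)), ∏ i ∈ s, x i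

open scoped Classical
open Matrix

namespace EsymRecAux

variable {F : Type} [Field F] [Fintype F]

lemma multiset_esymm_cons (a : F) (s : Multiset F) (m : ℕ) :
    (a ::ₘ s).esymm (m + 1) = s.esymm (m + 1) + a * s.esymm m := by
  rw [Multiset.esymm, Multiset.powersetCard_cons, Multiset.map_add, Multiset.sum_add,
    Multiset.map_map]
  congr 1
  rw [Multiset.esymm, ← Multiset.sum_map_mul_left]
  exact congrArg Multiset.sum (Multiset.map_congr rfl fun u _ => Multiset.prod_cons a u)

lemma esymFun_eq (k n : ℕ) (x : Fin n → F) :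
    esymFun k n x = ((univ : Finset (Fin n)).val.map x).esymm k :=
  (Finset.esymm_map_val x univ k).symm

lemma esymFun_zero (n : ℕ) (x : Fin n → F) : esymFun 0 n x = 1 := by
  simp [esymFun]

lemma univ_val_cons (n : ℕ) (y : F) (x : Fin n → F) :
    (univ : Finset (Fin (n + 1))).val.map (Fin.cons y x) =
      y ::ₘ (univ : Finset (Fin n)).val.map x := by
  rw [Fin.univ_succ, Finset.cons_val, Multiset.map_cons, Finset.map_val, Multiset.map_map]
  simp [Function.comp_def]

lemma esymFun_cons (k n : ℕ) (y : F) (x : Fin n → F) :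
    esymFun (k + 1) (n + 1) (Fin.cons y x) = esymFun (k + 1) n x + y * esymFun k n x := by
  rw [esymFun_eq, esymFun_eq, esymFun_eq, univ_val_cons, multiset_esymm_cons]

/-- Transition on the state `(e₁, …, e_{m+1})` when a new coordinate `y` is appended. -/
def T (m : ℕ) (y : F) (v : Fin (m + 1) → F) : Fin (m + 1) → F :=
  fun j => v j + y * (if h : (j : ℕ) = 0 then 1
    else v ⟨(j : ℕ) - 1, lt_of_le_of_lt (Nat.pred_le _) j.isLt⟩)

/-- The state of a tuple: its elementary symmetric values `(e₁, …, e_{m+1})`. -/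
def E (m n : ℕ) (x : Fin n → F) : Fin (m + 1) → F := fun j => esymFun ((j : ℕ) + 1) n x

lemma E_cons (m n : ℕ) (y : F) (x : Fin n → F) :
    E m (n + 1) (Fin.cons y x) = T m y (E m n x) := by
  funext j
  show esymFun ((j : ℕ) + 1) (n + 1) (Fin.cons y x) = _
  rw [esymFun_cons]
  unfold T E
  congr 1
  by_cases h : (j : ℕ) = 0
  · rw [dif_pos h, h, esymFun_zero, mul_one]
  · rw [dif_neg h]
    congr 2
    simp only [Fin.val_mk]
    omega

/-- Number of tuples with a given state, as a complex number. -/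
noncomputable def A (m n : ℕ) (v : Fin (m + 1) → F) : ℂ :=
  (((univ : Finset (Fin n → F)).filter (fun x => E m n x = v)).card : ℂ)

lemma A_eq_sum (m n : ℕ) (v : Fin (m + 1) → F) :
    A m n v = ∑ x : Fin n → F, if E m n x = v then (1 : ℂ) else 0 := by
  rw [A, Finset.sum_boole]

lemma sum_comp_E (m n : ℕ) (φ : (Fin (m + 1) → F) → ℂ) :
    ∑ x : Fin n → F, φ (E m n x) = ∑ v : Fin (m + 1) → F, A m n v * φ v := by
  symm
  calc ∑ v : Fin (m + 1) → F, A m n v * φ v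
      = ∑ v : Fin (m + 1) → F, ∑ x : Fin n → F,
          (if E m n x = v then φ v else 0) := by
        refine Finset.sum_congr rfl fun v _ => ?_
        rw [A_eq_sum, Finset.sum_mul]
        refine Finset.sum_congr rfl fun x _ => ?_
        rw [ite_mul, one_mul, zero_mul]
    _ = ∑ x : Fin n → F, ∑ v : Fin (m + 1) → F,
          if E m n x = v then φ v else 0 := Finset.sum_comm
    _ = ∑ x : Fin n → F, φ (E m n x) := by simp

/-- The integer transfer matrix. -/
noncomputable def NM (m : ℕ) : Matrix (Fin (m + 1) → F) (Fin (m + 1) → F) ℤ :=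
  fun v w => (((univ : Finset F).filter (fun y => T m y w = v)).card : ℤ)

lemma NM_eq_sum (m : ℕ) (v w : Fin (m + 1) → F) :
    ((NM (F := F) m v w : ℤ) : ℂ) = ∑ y : F, if T m y w = v then (1 : ℂ) else 0 := by
  simp [NM, Finset.sum_boole]

lemma A_succ (m n : ℕ) (v : Fin (m + 1) → F) :
    A m (n + 1) v = ∑ w : Fin (m + 1) → F, ((NM (F := F) m v w : ℤ) : ℂ) * A m n w := by
  have h1 : A m (n + 1) v
      = ∑ p : F × (Fin n → F), if E m (n + 1) (Fin.cons p.1 p.2) = v then (1 : ℂ) else 0 := by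
    rw [A_eq_sum, ← Equiv.sum_comp (Fin.consEquiv fun _ => F)
      (fun x' => if E m (n + 1) x' = v then (1 : ℂ) else 0)]
    rfl
  rw [h1, Fintype.sum_prod_type]
  simp_rw [E_cons]
  rw [Finset.sum_comm]
  have h2 := sum_comp_E (F := F) m n
    (fun w => ∑ y : F, if T m y w = v then (1 : ℂ) else 0)
  rw [h2]
  refine Finset.sum_congr rfl fun w _ => ?_
  rw [NM_eq_sum, mul_comm]

lemma sum_mulVec' {V : Type} [Fintype V] {ι : Type} (s : Finset ι)
    (A : ι → Matrix V V ℂ) (v : V → ℂ) :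
    (∑ i ∈ s, A i) *ᵥ v = ∑ i ∈ s, (A i) *ᵥ v := by
  funext w
  rw [Finset.sum_apply]
  simp only [Matrix.mulVec, dotProduct, Matrix.sum_apply, Finset.sum_mul]
  exact Finset.sum_comm

lemma A_eq_pow (m n : ℕ) :
    A (F := F) m n = ((NM (F := F) m).map (Int.cast : ℤ → ℂ)) ^ n *ᵥ A (F := F) m 0 := by
  induction n with
  | zero => simp [Matrix.one_mulVec]
  | succ n ih =>
    funext v
    rw [pow_succ', ← Matrix.mulVec_mulVec, ← ih, A_succ]
    simp [Matrix.mulVec, dotProduct, Matrix.map_apply]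

lemma matrix_pow_recurrence {V : Type} [Fintype V] [DecidableEq V] [Nonempty V]
    (N : Matrix V V ℤ) :
    ∃ c : ℕ → ℤ, ∀ s : ℕ, N ^ (s + Fintype.card V)
      = ∑ i ∈ Finset.range (Fintype.card V), c i • N ^ (s + i) := by
  set d := Fintype.card V with hdd
  refine ⟨fun i => -(N.charpoly.coeff i), fun s => ?_⟩
  have hd : N.charpoly.natDegree = d := Matrix.charpoly_natDegree_eq_dim N
  have h1 : N.charpoly.coeff d = 1 := by
    rw [← hd]; exact (Matrix.charpoly_monic N).coeff_natDegree
  have hCH : (0 : Matrix V V ℤ) = ∑ i ∈ Finset.range (d + 1), N.charpoly.coeff i • N ^ i := by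
    rw [← Matrix.aeval_self_charpoly N, Polynomial.aeval_eq_sum_range, hd]
  rw [Finset.sum_range_succ, h1, one_smul] at hCH
  have hNd : N ^ d = ∑ i ∈ Finset.range d, (-(N.charpoly.coeff i)) • N ^ i := by
    rw [eq_neg_of_add_eq_zero_right hCH.symm, ← Finset.sum_neg_distrib]
    exact Finset.sum_congr rfl fun i _ => (neg_smul _ _).symm
  rw [pow_add, hNd, Finset.mul_sum]
  exact Finset.sum_congr rfl fun i _ => by rw [mul_smul_comm, ← pow_add]

end EsymRecAux

theorem esym_expSum_linear_recurrence_GF (p r : ℕ) (hp : p.Prime) (hr : 1 ≤ r)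
    {F : Type} [Field F] [Fintype F] [Algebra (ZMod p) F] (hq : Fintype.card F = p ^ r)
    (k : ℕ) (hk : 2 ≤ k) :
    ∃ d : ℕ, 1 ≤ d ∧ ∃ c : ℕ → ℤ, ∀ n : ℕ, k + d ≤ n →
      expSumGF p F n (esymFun k n) =
        ∑ i ∈ Finset.range d, (c i : ℂ) * expSumGF p F (n - d + i) (esymFun k (n - d + i)) := by
  classical
  open EsymRecAux in
  obtain ⟨m, rfl⟩ : ∃ m, k = m + 1 := ⟨k - 1, by omega⟩
  set V := (Fin (m + 1) → F) with hV
  haveI : Nonempty V := ⟨fun _ => 0⟩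
  obtain ⟨c, hrec⟩ := matrix_pow_recurrence (NM (F := F) m)
  refine ⟨Fintype.card V, Fintype.card_pos, c, fun n hn => ?_⟩
  set d := Fintype.card V with hdd
  set φ : V → ℂ := fun v =>
    Complex.exp (2 * Real.pi * Complex.I *
      ((Algebra.trace (ZMod p) F (v (Fin.last m))).val : ℂ) / p) with hφ
  have hS : ∀ N : ℕ, expSumGF p F N (esymFun (m + 1) N) = ∑ v : V, A m N v * φ v := by
    intro N
    calc expSumGF p F N (esymFun (m + 1) N)
        = ∑ x : Fin N → F, φ (E m N x) := rfl
      _ = ∑ v : V, A m N v * φ v := sum_comp_E m N φ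
  set Mc := (NM (F := F) m).map (Int.cast : ℤ → ℂ) with hMc
  set a0 := A (F := F) m 0 with ha0
  have hs : n = (n - d) + d := by omega
  have hMc' : ∀ j : ℕ, Mc ^ j = (Int.castRingHom ℂ).mapMatrix ((NM (F := F) m) ^ j) := by
    intro j
    rw [map_pow, RingHom.mapMatrix_apply, hMc]
    norm_cast
  have hrecC : Mc ^ n = ∑ i ∈ Finset.range d, c i • Mc ^ ((n - d) + i) := by
    conv_lhs => rw [hs]
    rw [hMc', hrec (n - d), map_sum]
    refine Finset.sum_congr rfl fun i _ => ?_
    rw [map_zsmul, hMc']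
  have key : ∀ N : ℕ, expSumGF p F N (esymFun (m + 1) N)
      = ∑ v : V, ((Mc ^ N) *ᵥ a0) v * φ v := by
    intro N
    rw [hS, ha0, hMc]
    simp only [A_eq_pow (F := F) m N]
  simp only [key]
  rw [hrecC, sum_mulVec']
  simp only [← Matrix.mulVec_mulVec, Matrix.intCast_mulVec, Pi.smul_apply, smul_eq_mul,
    zsmul_eq_mul]
  simp only [Finset.sum_apply, Pi.smul_apply, smul_eq_mul, Finset.sum_mul]
  rw [Finset.sum_comm]
  refine Finset.sum_congr rfl fun i _ => ?_
  rw [Finset.mul_sum]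
  refine Finset.sum_congr rfl fun v _ => ?_
  ring
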